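/- arXiv:2201.13166 — 2 statements merged into one kernel-verified Lean document; each statement's English description precedes it below -/
import Mathlib

section
/- (Gagliardo–Nirenberg interpolation inequality.) Let n ≥ 3 and let q satisfy 2 ≤ q ≤ 2n/(n−2), and set α = n/2 − n/q (so α ∈ [0,1]). Then there exists a constant C_q = C_q(n,q) > 0 such that for every smooth compactly supported function u : ℝⁿ → ℝ one has ‖u‖_{L^q(ℝⁿ)} ≤ C_q · ‖u‖_{L²(ℝⁿ)}^{1−α} · ‖∇u‖_{L²(ℝⁿ)}^{α}, where ∇u denotes the gradient of u. -/
open MeasureTheory Set ENNReal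
open scoped NNReal

lemma interp_aux {X E : Type*} [NormedAddCommGroup E] {m : MeasurableSpace X} (μ : Measure X)
    {f : X → E} (hf : AEStronglyMeasurable f μ) {p₀ p₁ q α : ℝ}
    (hp₀ : 0 < p₀) (hp₁ : 0 < p₁) (hq : 0 < q) (hα0 : 0 ≤ α) (hα1 : α ≤ 1)
    (h : q * (1 - α) / p₀ + q * α / p₁ = 1) :
    eLpNorm f (ENNReal.ofReal q) μ ≤
      eLpNorm f (ENNReal.ofReal p₀) μ ^ (1 - α) * eLpNorm f (ENNReal.ofReal p₁) μ ^ α := by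
  rcases eq_or_lt_of_le hα0 with h0 | h0
  · -- α = 0
    have hqp : q = p₀ := by
      rw [← h0] at h
      field_simp at h
      exact mul_right_cancel₀ hp₁.ne' (by linarith [h] : q * p₁ = p₀ * p₁)
    rw [← h0, hqp]
    simp
  rcases eq_or_lt_of_le hα1 with h1 | h1
  · -- α = 1
    have hqp : q = p₁ := by
      rw [h1] at h
      field_simp at h
      exact mul_right_cancel₀ hp₀.ne' (by linarith [h] : q * p₀ = p₁ * p₀)
    rw [h1, hqp]
    simp
  -- interior case
  have h1α : 0 < 1 - α := by linarith
  have hq0 : q ≠ 0 := hq.ne'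
  set s : ℝ := p₀ / (q * (1 - α)) with hs
  set t : ℝ := p₁ / (q * α) with ht
  have hqa0 : 0 < q * (1 - α) := by positivity
  have hqa1 : 0 < q * α := by positivity
  have hst : Real.HolderConjugate s t := by
    rw [Real.holderConjugate_iff]
    constructor
    · rw [hs, lt_div_iff₀ hqa0, one_mul]
      have h2 : 0 < q * α / p₁ := by positivity
      have h3 : q * (1 - α) / p₀ < 1 := by linarith
      exact (div_lt_one hp₀).mp h3
    · show s⁻¹ + t⁻¹ = 1
      rw [hs, ht, inv_div, inv_div]
      exact h
  have hmf : AEMeasurable (fun x => (‖f x‖₊ : ℝ≥0∞)) μ := hf.enorm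
  have key : ∫⁻ x, (‖f x‖₊ : ℝ≥0∞) ^ q ∂μ ≤
      (∫⁻ x, (‖f x‖₊ : ℝ≥0∞) ^ p₀ ∂μ) ^ (1 / s) *
      (∫⁻ x, (‖f x‖₊ : ℝ≥0∞) ^ p₁ ∂μ) ^ (1 / t) := by
    have e1 : ∀ x : X, (‖f x‖₊ : ℝ≥0∞) ^ q =
        ((fun x => (‖f x‖₊ : ℝ≥0∞) ^ (q * (1 - α))) *
         (fun x => (‖f x‖₊ : ℝ≥0∞) ^ (q * α))) x := by
      intro x
      simp only [Pi.mul_apply]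
      rw [← ENNReal.rpow_add_of_nonneg _ _ hqa0.le hqa1.le]
      ring_nf
    calc ∫⁻ x, (‖f x‖₊ : ℝ≥0∞) ^ q ∂μ
        = ∫⁻ x, ((fun x => (‖f x‖₊ : ℝ≥0∞) ^ (q * (1 - α))) *
            (fun x => (‖f x‖₊ : ℝ≥0∞) ^ (q * α))) x ∂μ := by
          simp_rw [← e1]
      _ ≤ (∫⁻ x, ((‖f x‖₊ : ℝ≥0∞) ^ (q * (1 - α))) ^ s ∂μ) ^ (1 / s) *
          (∫⁻ x, ((‖f x‖₊ : ℝ≥0∞) ^ (q * α)) ^ t ∂μ) ^ (1 / t) :=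
          ENNReal.lintegral_mul_le_Lp_mul_Lq μ hst (hmf.pow_const _) (hmf.pow_const _)
      _ = (∫⁻ x, (‖f x‖₊ : ℝ≥0∞) ^ p₀ ∂μ) ^ (1 / s) *
          (∫⁻ x, (‖f x‖₊ : ℝ≥0∞) ^ p₁ ∂μ) ^ (1 / t) := by
          congr 2 <;> [skip; skip] <;> refine lintegral_congr fun x => ?_
          · rw [← ENNReal.rpow_mul]
            congr 1
            rw [hs]; field_simp
          · rw [← ENNReal.rpow_mul]
            congr 1
            rw [ht]; field_simp
  have eq : ∀ p : ℝ, 0 < p → eLpNorm f (ENNReal.ofReal p) μ =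
      (∫⁻ x, (‖f x‖₊ : ℝ≥0∞) ^ p ∂μ) ^ (1 / p) := by
    intro p hp
    rw [eLpNorm_eq_lintegral_rpow_enorm_toReal (by simp [hp]) (by simp),
      ENNReal.toReal_ofReal hp.le]
    rfl
  rw [eq q hq, eq p₀ hp₀, eq p₁ hp₁]
  calc (∫⁻ x, (‖f x‖₊ : ℝ≥0∞) ^ q ∂μ) ^ (1 / q)
      ≤ ((∫⁻ x, (‖f x‖₊ : ℝ≥0∞) ^ p₀ ∂μ) ^ (1 / s) *
         (∫⁻ x, (‖f x‖₊ : ℝ≥0∞) ^ p₁ ∂μ) ^ (1 / t)) ^ (1 / q) :=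
        ENNReal.rpow_le_rpow key (by positivity)
    _ = ((∫⁻ x, (‖f x‖₊ : ℝ≥0∞) ^ p₀ ∂μ) ^ (1 / p₀)) ^ (1 - α) *
        ((∫⁻ x, (‖f x‖₊ : ℝ≥0∞) ^ p₁ ∂μ) ^ (1 / p₁)) ^ α := by
        rw [ENNReal.mul_rpow_of_nonneg _ _ (by positivity), ← ENNReal.rpow_mul,
          ← ENNReal.rpow_mul, ← ENNReal.rpow_mul, ← ENNReal.rpow_mul]
        congr 1
        · congr 1
          rw [hs]; field_simp
        · congr 1
          rw [ht]; field_simp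

/-- Gagliardo–Nirenberg interpolation inequality: for `n ≥ 3`, `2 ≤ q ≤ 2n/(n-2)` and
`α = n/2 - n/q`, there is `C = C(n,q) > 0` with
`‖u‖_{L^q} ≤ C ‖u‖_{L²}^{1-α} ‖∇u‖_{L²}^α` for all smooth compactly supported `u : ℝⁿ → ℝ`. -/
theorem stmt2 (n : ℕ) (hn : 3 ≤ n) (q α : ℝ)
    (hq2 : 2 ≤ q) (hqn : q ≤ 2 * n / (n - 2)) (hα : α = n / 2 - n / q) :
    ∃ C : ℝ, 0 < C ∧
      ∀ u : (Fin n → ℝ) → ℝ, ContDiff ℝ (⊤ : ℕ∞) u → HasCompactSupport u →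
        eLpNorm u (ENNReal.ofReal q) volume ≤
          ENNReal.ofReal C * eLpNorm u 2 volume ^ (1 - α) *
            eLpNorm (fun x => ‖fderiv ℝ u x‖) 2 volume ^ α := by
  have hn0 : (0:ℝ) < n := by positivity
  have hn3 : (3:ℝ) ≤ n := by exact_mod_cast hn
  have hn2 : (0:ℝ) < (n:ℝ) - 2 := by linarith
  have hq0 : (0:ℝ) < q := by linarith
  set p' : ℝ := 2 * n / (n - 2) with hp'def
  have hp'pos : (0:ℝ) < p' := by positivity
  have hα0 : 0 ≤ α := by
    have h2 : (n:ℝ) / q ≤ n / 2 := div_le_div_of_nonneg_left hn0.le two_pos hq2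
    rw [hα]; linarith
  have hα1 : α ≤ 1 := by
    have h1 : (n:ℝ) / p' = (n - 2) / 2 := by rw [hp'def]; field_simp
    have h2 : (n:ℝ) / p' ≤ n / q := div_le_div_of_nonneg_left hn0.le hq0 hqn
    rw [h1] at h2
    rw [hα]; linarith
  set K : ℝ≥0 := eLpNormLESNormFDerivOfEqInnerConst (volume : Measure (Fin n → ℝ)) 2 with hK
  refine ⟨(K : ℝ) + 1, by positivity, fun u hu h2u => ?_⟩
  have hmeas : AEStronglyMeasurable u (volume : Measure (Fin n → ℝ)) :=
    hu.continuous.aestronglyMeasurable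
  -- exponent identity
  have hsum : q * (1 - α) / 2 + q * α / p' = 1 := by
    rw [hα, hp'def]
    field_simp
    ring
  -- interpolation
  have hinterp : eLpNorm u (ENNReal.ofReal q) volume ≤
      eLpNorm u (ENNReal.ofReal 2) volume ^ (1 - α) *
        eLpNorm u (ENNReal.ofReal p') volume ^ α :=
    interp_aux volume hmeas (by norm_num : (0:ℝ) < 2) hp'pos hq0 hα0 hα1 hsum
  rw [ENNReal.ofReal_ofNat] at hinterp
  -- Sobolev inequality
  have hfin : Module.finrank ℝ (Fin n → ℝ) = n := by simp
  have sob : eLpNorm u (ENNReal.ofReal p') volume ≤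
      (K : ℝ≥0∞) * eLpNorm (fun x => ‖fderiv ℝ u x‖) 2 volume := by
    rw [eLpNorm_norm]
    have hp'inv : ((p'.toNNReal : ℝ))⁻¹ = (((2:ℝ≥0)) : ℝ)⁻¹ -
        ((Module.finrank ℝ (Fin n → ℝ) : ℝ))⁻¹ := by
      rw [Real.coe_toNNReal _ hp'pos.le, hfin, hp'def]
      rw [inv_div]
      push_cast
      field_simp
    have := eLpNorm_le_eLpNorm_fderiv_of_eq_inner (F' := ℝ)
      (volume : Measure (Fin n → ℝ)) (hu.of_le (by simp)) h2u
      (p := 2) (p' := p'.toNNReal) (by norm_num) (by rw [hfin]; omega) hp'inv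
    have hcoe : (ENNReal.ofReal p') = (p'.toNNReal : ℝ≥0∞) := rfl
    rw [hcoe]
    convert this using 2 <;> simp [hK]
  -- assemble
  set A := eLpNorm u 2 volume
  set G := eLpNorm (fun x => ‖fderiv ℝ u x‖) 2 volume
  have hKle : (K : ℝ≥0∞) ^ α ≤ ENNReal.ofReal ((K : ℝ) + 1) := by
    have hb : (K : ℝ≥0∞) ≤ ENNReal.ofReal ((K : ℝ) + 1) := by
      rw [ENNReal.ofReal_add NNReal.zero_le_coe zero_le_one]
      simp [ENNReal.ofReal_coe_nnreal]
    have h1b : (1 : ℝ≥0∞) ≤ ENNReal.ofReal ((K : ℝ) + 1) := by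
      rw [ENNReal.one_le_ofReal]
      have : (0:ℝ) ≤ (K:ℝ) := K.coe_nonneg
      linarith
    calc (K : ℝ≥0∞) ^ α ≤ (ENNReal.ofReal ((K : ℝ) + 1)) ^ α :=
          ENNReal.rpow_le_rpow hb hα0
      _ ≤ (ENNReal.ofReal ((K : ℝ) + 1)) ^ (1:ℝ) :=
          ENNReal.rpow_le_rpow_of_exponent_le h1b hα1
      _ = ENNReal.ofReal ((K : ℝ) + 1) := ENNReal.rpow_one _
  calc eLpNorm u (ENNReal.ofReal q) volume
      ≤ A ^ (1 - α) * eLpNorm u (ENNReal.ofReal p') volume ^ α := hinterp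
    _ ≤ A ^ (1 - α) * ((K : ℝ≥0∞) * G) ^ α := by
        gcongr
    _ = A ^ (1 - α) * ((K : ℝ≥0∞) ^ α * G ^ α) := by
        rw [ENNReal.mul_rpow_of_nonneg _ _ hα0]
    _ ≤ A ^ (1 - α) * (ENNReal.ofReal ((K : ℝ) + 1) * G ^ α) := by
        gcongr
    _ = ENNReal.ofReal ((K : ℝ) + 1) * A ^ (1 - α) * G ^ α := by
        ring
end

section
/- (Mixed-norm interpolation via the Gagliardo–Nirenberg inequality.) Let n ≥ 3, let Ω ⊆ ℝⁿ be a bounded measurable set, T > 0, Q_T = Ω × (0,T). Let q satisfy 2 ≤ q ≤ 2n/(n−2), set α = n/2 − n/q, and let r ≥ 1 with αr ≥ 1. Then there exists a constant C_q = C_q(n,q) > 0 such that for every smooth function u : ℝⁿ × ℝ → ℝ with compact support contained in Ω × (0,T), one has ‖u‖_{q,r;Q_T} ≤ C_q · ( ess sup_{t∈(0,T)} ‖u(·,t)‖_{L²(Ω)} )^{1−α} · ‖ |∇ₓu| ‖_{2, αr; Q_T}^{α}, where ∇ₓu denotes the gradient of u in the space variables x. -/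
open MeasureTheory Set ENNReal

/-- The anisotropic (mixed-norm) Lebesgue quantity
`‖u‖_{q,r;Q_T} = (∫₀ᵀ (∫_Ω |u(x,t)|^q dx)^{r/q} dt)^{1/r}` (valued in `[0,∞]`). -/
noncomputable def mixedNorm {n : ℕ} (Ω : Set (Fin n → ℝ)) (T : ℝ) (q r : ℝ)
    (u : (Fin n → ℝ) → ℝ → ℝ) : ℝ≥0∞ :=
  (∫⁻ t in Ioo (0:ℝ) T, (∫⁻ x in Ω, ENNReal.ofReal (|u x t| ^ q)) ^ (r / q)) ^ (1 / r)

open NNReal in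
set_option maxHeartbeats 1000000 in
/-- Mixed-norm interpolation via the Gagliardo–Nirenberg inequality:
`‖u‖_{q,r;Q_T} ≤ C (esssup_{t∈(0,T)} ‖u(·,t)‖_{L²(Ω)})^{1-α} ‖|∇ₓu|‖_{2,αr;Q_T}^α`
for smooth `u` compactly supported in `Ω × (0,T)`. -/
theorem stmt3 {n : ℕ} (hn : 3 ≤ n) (Ω : Set (Fin n → ℝ)) (hΩ : MeasurableSet Ω)
    (hΩb : Bornology.IsBounded Ω) (T : ℝ) (hT : 0 < T)
    (q α r : ℝ) (hq2 : 2 ≤ q) (hqn : q ≤ 2 * n / (n - 2)) (hα : α = n / 2 - n / q)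
    (hr : 1 ≤ r) (hαr : 1 ≤ α * r) :
    ∃ C : ℝ, 0 < C ∧
      ∀ u : (Fin n → ℝ) × ℝ → ℝ, ContDiff ℝ (⊤ : ℕ∞) u → HasCompactSupport u →
        tsupport u ⊆ Ω ×ˢ Ioo (0:ℝ) T →
        mixedNorm Ω T q r (fun x t => u (x, t)) ≤
          ENNReal.ofReal C *
            (essSup (fun t => eLpNorm (fun x => u (x, t)) 2 (volume.restrict Ω))
              (volume.restrict (Ioo (0:ℝ) T))) ^ (1 - α) *
            mixedNorm Ω T 2 (α * r)
              (fun x t => ‖fderiv ℝ (fun y => u (y, t)) x‖) ^ α := by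
  classical
  have hn3 : (3:ℝ) ≤ (n:ℝ) := by exact_mod_cast hn
  have hn0 : (0:ℝ) < n := by linarith
  have hn2 : (0:ℝ) < (n:ℝ) - 2 := by linarith
  have hq0 : (0:ℝ) < q := by linarith
  have hr0 : (0:ℝ) < r := by linarith
  have hα0 : 0 < α := by by_contra h; push_neg at h; nlinarith
  set m : ℝ := 2 * n / (n - 2) with hm
  have hm0 : (0:ℝ) < m := by positivity
  have hα1 : α ≤ 1 := by
    have h1 : (n:ℝ) / m ≤ (n:ℝ) / q := by gcongr
    have h2 : (n:ℝ) / m = (n - 2) / 2 := by rw [hm]; field_simp; try ring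
    rw [hα]; rw [h2] at h1; linarith
  have hq2' : (2:ℝ) < q := by
    have h2q : (n:ℝ)/q < n/2 := by nlinarith [hα]
    have := (div_lt_div_iff₀ hq0 (by norm_num : (0:ℝ) < 2)).mp h2q
    nlinarith
  have id1 : (1-α)*q/2 + α*q/m = 1 := by
    rw [hα, hm]; field_simp; ring
  have id3 : m⁻¹ = 2⁻¹ - (n:ℝ)⁻¹ := by rw [hm]; field_simp; try ring
  set K : ℝ≥0 := SNormLESNormFDerivOfEqConst ℝ (volume : Measure (Fin n → ℝ)) 2 with hK
  refine ⟨(K:ℝ) + 1, by positivity, ?_⟩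
  intro u hu hcu hsu
  set M := essSup (fun t => eLpNorm (fun x => u (x, t)) 2 (volume.restrict Ω))
    (volume.restrict (Ioo (0:ℝ) T)) with hM
  have hCoe : ENNReal.ofReal ((K:ℝ) + 1) = (K:ℝ≥0∞) + 1 := by
    rw [ENNReal.ofReal_add K.coe_nonneg zero_le_one, ENNReal.ofReal_coe_nnreal,
      ENNReal.ofReal_one]
  -- Step A : the per-time Gagliardo–Nirenberg interpolation estimate
  have key : ∀ t : ℝ,
      (∫⁻ x in Ω, ENNReal.ofReal (|u (x, t)| ^ q)) ^ (1/q) ≤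
        ENNReal.ofReal ((K:ℝ) + 1) *
          (eLpNorm (fun x => u (x, t)) 2 (volume.restrict Ω)) ^ (1-α) *
          (∫⁻ x in Ω, ENNReal.ofReal (|‖fderiv ℝ (fun y => u (y, t)) x‖| ^ (2:ℝ))) ^ (α/2) := by
    intro t
    set f : (Fin n → ℝ) → ℝ := fun x => u (x, t) with hf
    have hfc : ContDiff ℝ 1 f := (hu.comp ((contDiff_id).prodMk contDiff_const)).of_le (by simp)
    have hmf : Measurable f := hfc.continuous.measurable
    have hsl : IsClosed {x : Fin n → ℝ | (x, t) ∈ tsupport u} :=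
      (isClosed_tsupport u).preimage (continuous_id.prodMk continuous_const)
    have hts : tsupport f ⊆ {x | (x, t) ∈ tsupport u} :=
      closure_minimal (fun x hx => subset_tsupport u hx) hsl
    have htsΩ : tsupport f ⊆ Ω := fun x hx => (hsu (hts hx)).1
    have hcf : HasCompactSupport f := by
      have hiso : Isometry (fun x : Fin n → ℝ => (x, t)) := by
        intro x y; simp [Prod.edist_eq]
      exact hcu.comp_isClosedEmbedding hiso.isClosedEmbedding
    have hf0 : ∀ x ∉ Ω, f x = 0 := by
      intro x hx
      by_contra h
      exact hx (htsΩ (subset_tsupport f h))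
    have hdf0 : ∀ x ∉ Ω, fderiv ℝ f x = 0 := by
      intro x hx
      by_contra h
      exact hx (htsΩ (support_fderiv_subset ℝ h))
    have hset : ∀ (g : (Fin n → ℝ) → ℝ≥0∞), (∀ x ∉ Ω, g x = 0) →
        ∫⁻ x in Ω, g x = ∫⁻ x, g x := by
      intro g hg
      rw [← lintegral_indicator hΩ]
      apply lintegral_congr
      intro x
      by_cases hx : x ∈ Ω <;> simp [hx, hg, Set.indicator]
    have hIconv : ∀ e : ℝ, 0 < e →
        ∫⁻ x in Ω, ENNReal.ofReal (|f x| ^ e) = ∫⁻ x, ((‖f x‖₊ : ℝ≥0∞)) ^ e := by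
      intro e he
      rw [hset _ (fun x hx => by rw [hf0 x hx]; simp [Real.zero_rpow he.ne'])]
      apply lintegral_congr
      intro x
      rw [← enorm_eq_nnnorm, Real.enorm_eq_ofReal_abs, ENNReal.ofReal_rpow_of_nonneg (abs_nonneg _) he.le]
    have hJconv :
        ∫⁻ x in Ω, ENNReal.ofReal (|‖fderiv ℝ f x‖| ^ (2:ℝ)) =
          ∫⁻ x, ((‖fderiv ℝ f x‖₊ : ℝ≥0∞)) ^ (2:ℝ) := by
      rw [hset _ (fun x hx => by
        rw [hdf0 x hx]; simp [Real.zero_rpow (by norm_num : (2:ℝ) ≠ 0)])]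
      apply lintegral_congr
      intro x
      rw [abs_norm, ← enorm_eq_nnnorm, ← ofReal_norm_eq_enorm,
        ENNReal.ofReal_rpow_of_nonneg (norm_nonneg _) (by norm_num)]
    -- Sobolev inequality
    set m' : ℝ≥0 := ⟨m, hm0.le⟩ with hm'
    have hm'0 : m' ≠ 0 := by
      simp only [← NNReal.coe_ne_zero]; exact hm0.ne'
    have hsob : (∫⁻ x, ((‖f x‖₊ : ℝ≥0∞)) ^ m) ^ (1/m) ≤
        (K : ℝ≥0∞) * (∫⁻ x, ((‖fderiv ℝ f x‖₊ : ℝ≥0∞)) ^ (2:ℝ)) ^ (1/(2:ℝ)) := by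
      have hfin : 0 < Module.finrank ℝ (Fin n → ℝ) := by
        rw [Module.finrank_fin_fun]; omega
      have hmm : (m' : ℝ) = m := rfl
      have hp' : ((m' : ℝ))⁻¹ = ((2:ℝ≥0) : ℝ)⁻¹ - (Module.finrank ℝ (Fin n → ℝ) : ℝ)⁻¹ := by
        rw [Module.finrank_fin_fun]
        simpa [hmm] using id3
      have h := eLpNorm_le_eLpNorm_fderiv_of_eq (F := ℝ)
        (volume : Measure (Fin n → ℝ)) hfc hcf (p := 2) (p' := m') one_le_two hfin hp'
      rw [eLpNorm_nnreal_eq_lintegral hm'0, eLpNorm_nnreal_eq_lintegral (two_ne_zero)] at h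
      simpa [hK, hmm, enorm_eq_nnnorm] using h
    -- interpolation
    have hinterp : (∫⁻ x, ((‖f x‖₊ : ℝ≥0∞)) ^ q) ≤
        (∫⁻ x, ((‖f x‖₊ : ℝ≥0∞)) ^ (2:ℝ)) ^ ((1-α)*q/2) *
          (∫⁻ x, ((‖f x‖₊ : ℝ≥0∞)) ^ m) ^ (α*q/m) := by
      rcases eq_or_lt_of_le hα1 with hα1' | hα1'
      · -- α = 1, then q = m
        have hqm : q = m := by
          rw [hm]
          have : (n:ℝ)/q = n/2 - 1 := by rw [hα] at hα1'; linarith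
          have hq' : (n:ℝ) = q * (n/2 - 1) := by
            field_simp at this; linarith
          field_simp
          nlinarith
        rw [hα1', hqm]
        norm_num [div_self hm0.ne']
      · have hposq : 0 < (1-α)*q := mul_pos (by linarith) hq0
        have hlt2 : (1-α)*q < 2 := by
          have h3 : 0 < α*q/m := by positivity
          linarith [id1]
        have hconj : Real.HolderConjugate (2/((1-α)*q)) (m/(α*q)) := by
          rw [Real.holderConjugate_iff]; constructor
          · rw [lt_div_iff₀ hposq]; linarith
          · rw [← one_div, ← one_div, one_div_div, one_div_div]; linarith [id1]
        have hmeas1 : AEMeasurable (fun x => ((‖f x‖₊ : ℝ≥0∞)) ^ ((1-α)*q)) volume := by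
          fun_prop
        have hmeas2 : AEMeasurable (fun x => ((‖f x‖₊ : ℝ≥0∞)) ^ (α*q)) volume := by
          fun_prop
        calc (∫⁻ x, ((‖f x‖₊ : ℝ≥0∞)) ^ q)
            = ∫⁻ x, ((fun x => ((‖f x‖₊ : ℝ≥0∞)) ^ ((1-α)*q)) *
                (fun x => ((‖f x‖₊ : ℝ≥0∞)) ^ (α*q))) x := by
              apply lintegral_congr
              intro x
              simp only [Pi.mul_apply]
              rw [← ENNReal.rpow_add_of_nonneg _ _ hposq.le (by positivity)]
              congr 1
              ring
          _ ≤ (∫⁻ x, (((‖f x‖₊ : ℝ≥0∞)) ^ ((1-α)*q)) ^ (2/((1-α)*q))) ^ (1/(2/((1-α)*q))) *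
              (∫⁻ x, (((‖f x‖₊ : ℝ≥0∞)) ^ (α*q)) ^ (m/(α*q))) ^ (1/(m/(α*q))) :=
              ENNReal.lintegral_mul_le_Lp_mul_Lq volume hconj hmeas1 hmeas2
          _ = (∫⁻ x, ((‖f x‖₊ : ℝ≥0∞)) ^ (2:ℝ)) ^ ((1-α)*q/2) *
              (∫⁻ x, ((‖f x‖₊ : ℝ≥0∞)) ^ m) ^ (α*q/m) := by
              have e1 : ((1-α)*q) * (2/((1-α)*q)) = 2 := by field_simp [ne_of_gt hposq]
              have e2 : (α*q) * (m/(α*q)) = m := by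
                field_simp [ne_of_gt (mul_pos hα0 hq0)]
              rw [one_div_div, one_div_div]
              congr 1
              · congr 1
                apply lintegral_congr
                intro x
                rw [← ENNReal.rpow_mul, e1]
              · congr 1
                apply lintegral_congr
                intro x
                rw [← ENNReal.rpow_mul, e2]
    -- put things together
    have hE2 : eLpNorm f 2 (volume.restrict Ω) =
        (∫⁻ x, ((‖f x‖₊ : ℝ≥0∞)) ^ (2:ℝ)) ^ (1/(2:ℝ)) := by
      rw [eLpNorm_eq_lintegral_rpow_enorm_toReal two_ne_zero ENNReal.ofNat_ne_top]
      simp only [ENNReal.toReal_ofNat, enorm_eq_nnnorm]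
      rw [hset _ (fun x hx => by
        rw [hf0 x hx]; simp)]
    have hKα : (K : ℝ≥0∞) ^ α ≤ ENNReal.ofReal ((K:ℝ) + 1) := by
      rw [hCoe]
      calc (K : ℝ≥0∞) ^ α ≤ ((K : ℝ≥0∞) + 1) ^ α := by
            gcongr
            exact le_self_add
        _ ≤ ((K : ℝ≥0∞) + 1) ^ (1:ℝ) :=
            ENNReal.rpow_le_rpow_of_exponent_le le_add_self hα1
        _ = (K : ℝ≥0∞) + 1 := ENNReal.rpow_one _
    calc (∫⁻ x in Ω, ENNReal.ofReal (|u (x, t)| ^ q)) ^ (1/q)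
        = (∫⁻ x, ((‖f x‖₊ : ℝ≥0∞)) ^ q) ^ (1/q) := by rw [hIconv q hq0]
      _ ≤ ((∫⁻ x, ((‖f x‖₊ : ℝ≥0∞)) ^ (2:ℝ)) ^ ((1-α)*q/2) *
            (∫⁻ x, ((‖f x‖₊ : ℝ≥0∞)) ^ m) ^ (α*q/m)) ^ (1/q) :=
          ENNReal.rpow_le_rpow hinterp (by positivity)
      _ = (∫⁻ x, ((‖f x‖₊ : ℝ≥0∞)) ^ (2:ℝ)) ^ ((1-α)/2) *
            ((∫⁻ x, ((‖f x‖₊ : ℝ≥0∞)) ^ m) ^ (1/m)) ^ α := by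
          rw [ENNReal.mul_rpow_of_nonneg _ _ (by positivity), ← ENNReal.rpow_mul,
            ← ENNReal.rpow_mul, ← ENNReal.rpow_mul]
          congr 1
          · congr 1; field_simp
          · congr 1; field_simp
      _ ≤ (∫⁻ x, ((‖f x‖₊ : ℝ≥0∞)) ^ (2:ℝ)) ^ ((1-α)/2) *
            ((K : ℝ≥0∞) * (∫⁻ x, ((‖fderiv ℝ f x‖₊ : ℝ≥0∞)) ^ (2:ℝ)) ^ (1/(2:ℝ))) ^ α := by
          gcongr
      _ = ((K : ℝ≥0∞) ^ α) * ((∫⁻ x, ((‖f x‖₊ : ℝ≥0∞)) ^ (2:ℝ)) ^ (1/(2:ℝ))) ^ (1-α) *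
            (∫⁻ x, ((‖fderiv ℝ f x‖₊ : ℝ≥0∞)) ^ (2:ℝ)) ^ (α/2) := by
          rw [ENNReal.mul_rpow_of_nonneg _ _ hα0.le, ← ENNReal.rpow_mul, ← ENNReal.rpow_mul]
          rw [show (1/(2:ℝ)) * α = α/2 by ring, show (1/(2:ℝ)) * (1-α) = (1-α)/2 by ring]
          ring
      _ ≤ ENNReal.ofReal ((K:ℝ) + 1) *
            (eLpNorm (fun x => u (x, t)) 2 (volume.restrict Ω)) ^ (1-α) *
            (∫⁻ x in Ω, ENNReal.ofReal (|‖fderiv ℝ (fun y => u (y, t)) x‖| ^ (2:ℝ))) ^ (α/2) := by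
          rw [hE2, hJconv]
          gcongr
  -- M is finite
  obtain ⟨B, hB⟩ := hcu.exists_bound_of_continuous hu.continuous
  have hΩfin : volume Ω < ⊤ := hΩb.measure_lt_top
  have hM_ne : M ≠ ⊤ := by
    have hMle : M ≤ volume Ω ^ ((2:ℝ≥0∞).toReal)⁻¹ * ENNReal.ofReal B := by
      refine essSup_le_of_ae_le _ ?_
      apply Filter.Eventually.of_forall
      intro t
      calc eLpNorm (fun x => u (x, t)) 2 (volume.restrict Ω)
          ≤ (volume.restrict Ω) univ ^ ((2:ℝ≥0∞).toReal)⁻¹ * ENNReal.ofReal B :=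
            eLpNorm_le_of_ae_bound (Filter.Eventually.of_forall fun x => hB (x, t))
        _ = volume Ω ^ ((2:ℝ≥0∞).toReal)⁻¹ * ENNReal.ofReal B := by
            rw [Measure.restrict_apply_univ]
    exact ne_top_of_le_ne_top (ENNReal.mul_ne_top
      (ENNReal.rpow_ne_top_of_nonneg (by positivity) hΩfin.ne) ENNReal.ofReal_ne_top) hMle
  -- Step B : integrate in time
  simp only [mixedNorm]
  set C : ℝ := (K:ℝ) + 1 with hC
  set It : ℝ → ℝ≥0∞ := fun t => ∫⁻ x in Ω, ENNReal.ofReal (|u (x, t)| ^ q) with hIt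
  set Jt : ℝ → ℝ≥0∞ := fun t =>
    ∫⁻ x in Ω, ENNReal.ofReal (|‖fderiv ℝ (fun y => u (y, t)) x‖| ^ (2:ℝ)) with hJt
  have hexp1 : 0 ≤ (1-α)*r := by nlinarith
  have hc_ne : (ENNReal.ofReal C) ^ r * M ^ ((1-α)*r) ≠ ⊤ :=
    ENNReal.mul_ne_top (ENNReal.rpow_ne_top_of_nonneg hr0.le ENNReal.ofReal_ne_top)
      (ENNReal.rpow_ne_top_of_nonneg hexp1 hM_ne)
  have hae : ∀ᵐ t ∂(volume.restrict (Ioo (0:ℝ) T)),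
      (It t) ^ (r/q) ≤ (ENNReal.ofReal C) ^ r * M ^ ((1-α)*r) * (Jt t) ^ (α*r/2) := by
    filter_upwards [ae_le_essSup
      (fun t => eLpNorm (fun x => u (x, t)) 2 (volume.restrict Ω))] with t ht
    calc (It t) ^ (r/q) = ((It t) ^ (1/q)) ^ r := by
          rw [← ENNReal.rpow_mul]
          congr 1
          field_simp
      _ ≤ (ENNReal.ofReal C * (eLpNorm (fun x => u (x, t)) 2 (volume.restrict Ω)) ^ (1-α) *
            (Jt t) ^ (α/2)) ^ r := ENNReal.rpow_le_rpow (key t) hr0.le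
      _ ≤ (ENNReal.ofReal C * M ^ (1-α) * (Jt t) ^ (α/2)) ^ r := by
          apply ENNReal.rpow_le_rpow _ hr0.le
          apply mul_le_mul' (mul_le_mul' le_rfl _) le_rfl
          exact ENNReal.rpow_le_rpow ht (by linarith)
      _ = (ENNReal.ofReal C) ^ r * M ^ ((1-α)*r) * (Jt t) ^ (α*r/2) := by
          rw [ENNReal.mul_rpow_of_nonneg _ _ hr0.le, ENNReal.mul_rpow_of_nonneg _ _ hr0.le,
            ← ENNReal.rpow_mul, ← ENNReal.rpow_mul]
          congr 2
          ring
  have hint : (∫⁻ t in Ioo (0:ℝ) T, (It t) ^ (r/q)) ≤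
      (ENNReal.ofReal C) ^ r * M ^ ((1-α)*r) * ∫⁻ t in Ioo (0:ℝ) T, (Jt t) ^ (α*r/2) :=
    (lintegral_mono_ae hae).trans_eq (lintegral_const_mul' _ _ hc_ne)
  have hαr0 : (0:ℝ) < α * r := mul_pos hα0 hr0
  calc (∫⁻ t in Ioo (0:ℝ) T, (It t) ^ (r/q)) ^ (1/r)
      ≤ ((ENNReal.ofReal C) ^ r * M ^ ((1-α)*r) *
          ∫⁻ t in Ioo (0:ℝ) T, (Jt t) ^ (α*r/2)) ^ (1/r) :=
        ENNReal.rpow_le_rpow hint (by positivity)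
    _ = ENNReal.ofReal C * M ^ (1-α) *
          ((∫⁻ t in Ioo (0:ℝ) T, (Jt t) ^ (α*r/2)) ^ (1/(α*r))) ^ α := by
        rw [ENNReal.mul_rpow_of_nonneg _ _ (by positivity),
          ENNReal.mul_rpow_of_nonneg _ _ (by positivity),
          ← ENNReal.rpow_mul, ← ENNReal.rpow_mul, ← ENNReal.rpow_mul]
        congr 2
        · rw [mul_one_div_cancel hr0.ne', ENNReal.rpow_one]
        · congr 1; field_simp
        · congr 1; field_simp
    _ = ENNReal.ofReal C * M ^ (1-α) *
          ((∫⁻ t in Ioo (0:ℝ) T, (Jt t) ^ ((α*r)/2)) ^ (1/(α*r))) ^ α := by norm_num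
end
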